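/- arXiv:2503.03181 — 5 statements merged into one kernel-verified Lean document; each statement's English description precedes it below -/
import Mathlib

section
/- In End(C^{1|1})^{⊗3}, the permutation-type operators P^{ij}, Q^{ij} (acting in tensor factors i,j) satisfy: P^{12}P^{13} = P^{23}P^{12} = P^{13}P^{23}, P^{12}Q^{13} = Q^{23}P^{12} = Q^{13}Q^{23}, Q^{12}Q^{13} = -P^{23}Q^{12} = -Q^{13}P^{23}, and Q^{12}P^{13} = -Q^{23}Q^{12} = -P^{13}Q^{23}. -/
/-- Index set `{1,-1}` of `C^{1|1}`: `inl 0 = 1`, `inr 0 = -1`. -/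
abbrev I1 := Fin 1 ⊕ Fin 1

def I1.neg : I1 → I1 := Sum.swap

def I1.par : I1 → ZMod 2
  | Sum.inl _ => 0
  | Sum.inr _ => 1

/-- Matrix unit `ε_{ij}` of `End(C^{1|1})`. -/
noncomputable def eps (i j : I1) : Matrix I1 I1 ℂ := Matrix.single i j 1

/-- Super (Koszul-signed) tensor product `a ⊗ b ⊗ c` of three elements of `End(C^{1|1})`,
realized as the operator on `(C^{1|1})^{⊗3}`:
`(a⊗b⊗c)(v₁⊗v₂⊗v₃) = (-1)^{(|b|+|c|)|v₁| + |c||v₂|} a v₁ ⊗ b v₂ ⊗ c v₃`.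
This realization is an isomorphism of the super tensor product algebra `End(C^{1|1})^{⊗3}`
onto `End((C^{1|1})^{⊗3})`. -/
noncomputable def tmul3 (a b c : Matrix I1 I1 ℂ) :
    Matrix (I1 × I1 × I1) (I1 × I1 × I1) ℂ :=
  Matrix.of fun p q =>
    ((-1 : ℂ) ^ ((((I1.par p.2.1 + I1.par q.2.1) + (I1.par p.2.2 + I1.par q.2.2)) * I1.par q.1
        + (I1.par p.2.2 + I1.par q.2.2) * I1.par q.2.1).val))
      * a p.1 q.1 * b p.2.1 q.2.1 * c p.2.2 q.2.2

/-- `P^{12}` in `End(C^{1|1})^{⊗3}`. -/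
noncomputable def P12 : Matrix (I1 × I1 × I1) (I1 × I1 × I1) ℂ :=
  ∑ r : I1, ∑ s : I1, ((-1 : ℂ) ^ (I1.par s).val) • tmul3 (eps r s) (eps s r) 1

/-- `P^{13}` in `End(C^{1|1})^{⊗3}`. -/
noncomputable def P13 : Matrix (I1 × I1 × I1) (I1 × I1 × I1) ℂ :=
  ∑ r : I1, ∑ s : I1, ((-1 : ℂ) ^ (I1.par s).val) • tmul3 (eps r s) 1 (eps s r)

/-- `P^{23}` in `End(C^{1|1})^{⊗3}`. -/
noncomputable def P23 : Matrix (I1 × I1 × I1) (I1 × I1 × I1) ℂ :=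
  ∑ r : I1, ∑ s : I1, ((-1 : ℂ) ^ (I1.par s).val) • tmul3 1 (eps r s) (eps s r)

/-- `Q^{12}` in `End(C^{1|1})^{⊗3}`. -/
noncomputable def Q12 : Matrix (I1 × I1 × I1) (I1 × I1 × I1) ℂ :=
  ∑ r : I1, ∑ s : I1,
    ((-1 : ℂ) ^ (I1.par s).val) • tmul3 (eps r s) (eps (I1.neg s) (I1.neg r)) 1

/-- `Q^{13}` in `End(C^{1|1})^{⊗3}`. -/
noncomputable def Q13 : Matrix (I1 × I1 × I1) (I1 × I1 × I1) ℂ :=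
  ∑ r : I1, ∑ s : I1,
    ((-1 : ℂ) ^ (I1.par s).val) • tmul3 (eps r s) 1 (eps (I1.neg s) (I1.neg r))

/-- `Q^{23}` in `End(C^{1|1})^{⊗3}`. -/
noncomputable def Q23 : Matrix (I1 × I1 × I1) (I1 × I1 × I1) ℂ :=
  ∑ r : I1, ∑ s : I1,
    ((-1 : ℂ) ^ (I1.par s).val) • tmul3 1 (eps r s) (eps (I1.neg s) (I1.neg r))

/-! Every `P^{ij}` and `Q^{ij}` is a signed permutation matrix in the basis `e_a ⊗ e_b ⊗ e_c`:
`P^{ij}` exchanges the `i`-th and `j`-th indices, `Q^{ij}` exchanges them and applies `I1.neg`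
to both, and the sign is a Koszul-type polynomial in the parities. Signed permutation matrices
multiply by composing the permutations and adding the signs in `ZMod 2`, so each relation becomes
an equality of two maps on the eight index triples, together with an equality of two sign
functions; both are finite checks. -/

theorem neg_one_pow_val_add {R : Type*} [Ring R] (a b : ZMod 2) :
    (-1 : R) ^ (a + b).val = (-1) ^ a.val * (-1) ^ b.val := by
  rw [ZMod.val_add, ← neg_one_pow_eq_pow_mod_two, pow_add]

section SignedPermMatrix

variable {X R : Type*} [DecidableEq X] [Ring R]

def signedPermMatrix (σ : X → X) (ε : X → ZMod 2) : Matrix X X R :=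
  Matrix.of fun p q => if p = σ q then (-1) ^ (ε q).val else 0

theorem signedPermMatrix_mul [Fintype X] (σ τ : X → X) (ε δ : X → ZMod 2) :
    signedPermMatrix σ ε * signedPermMatrix τ δ
      = (signedPermMatrix (σ ∘ τ) (fun q => ε (τ q) + δ q) : Matrix X X R) := by
  ext p q
  simp [signedPermMatrix, Matrix.mul_apply, neg_one_pow_val_add]

theorem neg_signedPermMatrix (σ : X → X) (ε : X → ZMod 2) :
    -signedPermMatrix σ ε = (signedPermMatrix σ (fun q => ε q + 1) : Matrix X X R) := by
  ext p q
  simp only [signedPermMatrix, Matrix.neg_apply, Matrix.of_apply, neg_one_pow_val_add, ZMod.val_one]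
  split_ifs <;> simp

end SignedPermMatrix

theorem P12_eq_signedPermMatrix :
    P12 = signedPermMatrix (fun (a, b, c) => (b, a, c))
      (fun (a, b, _) => a.par * b.par) := by
  ext p q
  revert p q
  simp [Prod.forall, Sum.forall, Fin.forall_fin_one, P12, signedPermMatrix, tmul3, eps,
    Matrix.sum_apply, Matrix.one_apply, Matrix.single_apply, Fintype.sum_sum_type, I1.par,
    ZMod.val_add, ZMod.val_one]

theorem P13_eq_signedPermMatrix :
    P13 = signedPermMatrix (fun (a, b, c) => (c, b, a))
      (fun (a, b, c) => a.par * b.par + a.par * c.par + b.par * c.par) := by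
  ext p q
  revert p q
  simp [Prod.forall, Sum.forall, Fin.forall_fin_one, P13, signedPermMatrix, tmul3, eps,
    Matrix.sum_apply, Matrix.one_apply, Matrix.single_apply, Fintype.sum_sum_type, I1.par,
    ZMod.val_add, ZMod.val_one]

theorem P23_eq_signedPermMatrix :
    P23 = signedPermMatrix (fun (a, b, c) => (a, c, b))
      (fun (_, b, c) => b.par * c.par) := by
  ext p q
  revert p q
  simp [Prod.forall, Sum.forall, Fin.forall_fin_one, P23, signedPermMatrix, tmul3, eps,
    Matrix.sum_apply, Matrix.one_apply, Matrix.single_apply, Fintype.sum_sum_type, I1.par,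
    ZMod.val_add, ZMod.val_one]

theorem Q12_eq_signedPermMatrix :
    Q12 = signedPermMatrix (fun (a, b, c) => (b.neg, a.neg, c))
      (fun (a, b, _) => a.par * (b.par + 1)) := by
  ext p q
  revert p q
  simp [Prod.forall, Sum.forall, Fin.forall_fin_one, Q12, signedPermMatrix, tmul3, eps,
    Matrix.sum_apply, Matrix.one_apply, Matrix.single_apply, Fintype.sum_sum_type, I1.par, I1.neg,
    ZMod.val_add, ZMod.val_one]

theorem Q13_eq_signedPermMatrix :
    Q13 = signedPermMatrix (fun (a, b, c) => (c.neg, b, a.neg))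
      (fun (a, b, c) => a.par * b.par + a.par * c.par + b.par * c.par + a.par + b.par) := by
  ext p q
  revert p q
  simp [Prod.forall, Sum.forall, Fin.forall_fin_one, Q13, signedPermMatrix, tmul3, eps,
    Matrix.sum_apply, Matrix.one_apply, Matrix.single_apply, Fintype.sum_sum_type, I1.par, I1.neg,
    ZMod.val_add, ZMod.val_one]

theorem Q23_eq_signedPermMatrix :
    Q23 = signedPermMatrix (fun (a, b, c) => (a, c.neg, b.neg))
      (fun (_, b, c) => b.par * (c.par + 1)) := by
  ext p q
  revert p q
  simp [Prod.forall, Sum.forall, Fin.forall_fin_one, Q23, signedPermMatrix, tmul3, eps,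
    Matrix.sum_apply, Matrix.one_apply, Matrix.single_apply, Fintype.sum_sum_type, I1.par, I1.neg,
    ZMod.val_add, ZMod.val_one]

/-- Quadratic relations among the operators `P^{ij}`, `Q^{ij}` in `End(C^{1|1})^{⊗3}`. -/
theorem stmt3 :
    (P12 * P13 = P23 * P12 ∧ P23 * P12 = P13 * P23) ∧
    (P12 * Q13 = Q23 * P12 ∧ Q23 * P12 = Q13 * Q23) ∧
    (Q12 * Q13 = -(P23 * Q12) ∧ -(P23 * Q12) = -(Q13 * P23)) ∧
    (Q12 * P13 = -(Q23 * Q12) ∧ -(Q23 * Q12) = -(P13 * Q23)) := by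
  simp only [P12_eq_signedPermMatrix, P13_eq_signedPermMatrix, P23_eq_signedPermMatrix,
    Q12_eq_signedPermMatrix, Q13_eq_signedPermMatrix, Q23_eq_signedPermMatrix,
    signedPermMatrix_mul, neg_signedPermMatrix]
  refine ⟨⟨?_, ?_⟩, ⟨?_, ?_⟩, ⟨?_, ?_⟩, ⟨?_, ?_⟩⟩ <;> congr 1 <;> decide
end

section
/- In End(C^{1|1})^{⊗3}: P^{12}P^{13}P^{23} = P^{23}P^{13}P^{12}, P^{12}Q^{13}Q^{23} = Q^{23}Q^{13}P^{12}, Q^{12}Q^{13}P^{23} = P^{23}Q^{13}Q^{12}, and Q^{12}P^{13}Q^{23} = Q^{23}P^{13}Q^{12}. -/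
/-! All structure constants of `P^{ij}` and `Q^{ij}` are integers, so the same operators are
defined over any ring and are the images of the integral ones under `ℤ → R`. Over `ℤ` the four
relations are identities between explicit `8 × 8` integer matrices, which the kernel verifies by
computation; ring homomorphisms preserve them. -/

namespace SuperMatrix

variable (R : Type*) [Ring R]

abbrev Op3 := Matrix (I1 × I1 × I1) (I1 × I1 × I1) R

def superTmul3 (a b c : Matrix I1 I1 R) : Op3 R :=
  Matrix.of fun p q =>
    ((-1 : R) ^ ((((I1.par p.2.1 + I1.par q.2.1) + (I1.par p.2.2 + I1.par q.2.2)) * I1.par q.1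
        + (I1.par p.2.2 + I1.par q.2.2) * I1.par q.2.1).val))
      * a p.1 q.1 * b p.2.1 q.2.1 * c p.2.2 q.2.2

def at12 (σ : I1 → I1 → I1 × I1) : Op3 R :=
  ∑ r : I1, ∑ s : I1, ((-1 : R) ^ (I1.par s).val) •
    superTmul3 R (Matrix.single r s 1) (Matrix.single (σ r s).1 (σ r s).2 1) 1

def at13 (σ : I1 → I1 → I1 × I1) : Op3 R :=
  ∑ r : I1, ∑ s : I1, ((-1 : R) ^ (I1.par s).val) •
    superTmul3 R (Matrix.single r s 1) 1 (Matrix.single (σ r s).1 (σ r s).2 1)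

def at23 (σ : I1 → I1 → I1 × I1) : Op3 R :=
  ∑ r : I1, ∑ s : I1, ((-1 : R) ^ (I1.par s).val) •
    superTmul3 R 1 (Matrix.single r s 1) (Matrix.single (σ r s).1 (σ r s).2 1)

/-- Over `ℂ`, `at_ij ℂ swapIdx` and `at_ij ℂ negSwapIdx` are `P^{ij}` and `Q^{ij}` by definition. -/
def swapIdx (r s : I1) : I1 × I1 := (s, r)

def negSwapIdx (r s : I1) : I1 × I1 := (I1.neg s, I1.neg r)

variable {R}

def CubicRelations (P12 P13 P23 Q12 Q13 Q23 : Op3 R) : Prop :=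
  P12 * P13 * P23 = P23 * P13 * P12 ∧
  P12 * Q13 * Q23 = Q23 * Q13 * P12 ∧
  Q12 * Q13 * P23 = P23 * Q13 * Q12 ∧
  Q12 * P13 * Q23 = Q23 * P13 * Q12

variable {S : Type*} [Ring S] (f : R →+* S)

theorem CubicRelations.map {P12 P13 P23 Q12 Q13 Q23 : Op3 R}
    (h : CubicRelations P12 P13 P23 Q12 Q13 Q23) :
    CubicRelations (f.mapMatrix P12) (f.mapMatrix P13) (f.mapMatrix P23)
      (f.mapMatrix Q12) (f.mapMatrix Q13) (f.mapMatrix Q23) := by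
  obtain ⟨h₁, h₂, h₃, h₄⟩ := h
  simp only [CubicRelations, ← map_mul, h₁, h₂, h₃, h₄, and_self]

theorem map_superTmul3 (a b c : Matrix I1 I1 R) :
    f.mapMatrix (superTmul3 R a b c) =
      superTmul3 S (f.mapMatrix a) (f.mapMatrix b) (f.mapMatrix c) := by
  ext p q
  simp [superTmul3]

theorem map_neg_one_pow_smul (k : ℕ) (M : Op3 R) :
    f.mapMatrix ((-1 : R) ^ k • M) = (-1 : S) ^ k • f.mapMatrix M := by
  ext p q
  simp

theorem map_at12 (σ : I1 → I1 → I1 × I1) : f.mapMatrix (at12 R σ) = at12 S σ := by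
  simp only [at12, map_sum, map_neg_one_pow_smul, map_superTmul3, map_one]
  simp [Matrix.map_single]

theorem map_at13 (σ : I1 → I1 → I1 × I1) : f.mapMatrix (at13 R σ) = at13 S σ := by
  simp only [at13, map_sum, map_neg_one_pow_smul, map_superTmul3, map_one]
  simp [Matrix.map_single]

theorem map_at23 (σ : I1 → I1 → I1 × I1) : f.mapMatrix (at23 R σ) = at23 S σ := by
  simp only [at23, map_sum, map_neg_one_pow_smul, map_superTmul3, map_one]
  simp [Matrix.map_single]

theorem cubicRelations_int :
    CubicRelations (at12 ℤ swapIdx) (at13 ℤ swapIdx) (at23 ℤ swapIdx)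
      (at12 ℤ negSwapIdx) (at13 ℤ negSwapIdx) (at23 ℤ negSwapIdx) := by
  refine ⟨?_, ?_, ?_, ?_⟩ <;> decide

variable (R) in
theorem cubicRelations :
    CubicRelations (at12 R swapIdx) (at13 R swapIdx) (at23 R swapIdx)
      (at12 R negSwapIdx) (at13 R negSwapIdx) (at23 R negSwapIdx) := by
  simpa only [map_at12, map_at13, map_at23] using cubicRelations_int.map (Int.castRingHom R)

end SuperMatrix

/-- Cubic relations among the operators `P^{ij}`, `Q^{ij}` in `End(C^{1|1})^{⊗3}`. -/
theorem stmt4 :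
    P12 * P13 * P23 = P23 * P13 * P12 ∧
    P12 * Q13 * Q23 = Q23 * Q13 * P12 ∧
    Q12 * Q13 * P23 = P23 * Q13 * Q12 ∧
    Q12 * P13 * Q23 = Q23 * P13 * Q12 :=
  SuperMatrix.cubicRelations ℂ
end

section
/- In End(C^{1|1})^{⊗3}: P^{12}P^{13}Q^{23} = P^{23}Q^{13}P^{12} = Q^{12}P^{13}P^{23} = Q^{23}Q^{13}Q^{12}, and Q^{23}P^{13}P^{12} = P^{12}Q^{13}P^{23} = P^{23}P^{13}Q^{12} = Q^{12}Q^{13}Q^{23}. -/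
/-! All six operators have entries in `ℤ`, so each relation is the image under `Int.cast` of an
identity between explicit `8 × 8` integer matrices, which the kernel checks by evaluation. -/

section IntegerModel

variable (R : Type*) [CommRing R]

def superTmul3 (a b c : Matrix I1 I1 R) : Matrix (I1 × I1 × I1) (I1 × I1 × I1) R :=
  Matrix.of fun p q =>
    ((-1 : R) ^ ((((I1.par p.2.1 + I1.par q.2.1) + (I1.par p.2.2 + I1.par q.2.2)) * I1.par q.1
        + (I1.par p.2.2 + I1.par q.2.2) * I1.par q.2.1).val))
      * a p.1 q.1 * b p.2.1 q.2.1 * c p.2.2 q.2.2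

inductive Legs
  | l12
  | l13
  | l23

def placeOnLegs :
    Legs → Matrix I1 I1 R → Matrix I1 I1 R → Matrix (I1 × I1 × I1) (I1 × I1 × I1) R
  | .l12, a, b => superTmul3 R a b 1
  | .l13, a, b => superTmul3 R a 1 b
  | .l23, a, b => superTmul3 R 1 a b

/-- `∑_{r,s} (-1)^{|s|} ε_{rs} ⊗ ε_{φ s, φ r}` on the legs `ij`: `φ = id` gives `P^{ij}`,
`φ = I1.neg` gives `Q^{ij}`. -/
def twoLegOp (φ : I1 → I1) (ij : Legs) : Matrix (I1 × I1 × I1) (I1 × I1 × I1) R :=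
  ∑ r : I1, ∑ s : I1,
    ((-1 : R) ^ (I1.par s).val) •
      placeOnLegs R ij (Matrix.single r s 1) (Matrix.single (φ s) (φ r) 1)

variable {R} {S : Type*} [CommRing S] (f : R →+* S)

theorem superTmul3_map (a b c : Matrix I1 I1 R) :
    (superTmul3 R a b c).map f = superTmul3 S (a.map f) (b.map f) (c.map f) := by
  ext p q
  simp [superTmul3]

theorem placeOnLegs_map (ij : Legs) (a b : Matrix I1 I1 R) :
    (placeOnLegs R ij a b).map f = placeOnLegs S ij (a.map f) (b.map f) := by
  cases ij <;> simp [placeOnLegs, superTmul3_map]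

theorem twoLegOp_map (φ : I1 → I1) (ij : Legs) :
    (twoLegOp R φ ij).map f = twoLegOp S φ ij := by
  rw [twoLegOp, twoLegOp, ← RingHom.mapMatrix_apply]
  simp only [map_sum, RingHom.mapMatrix_apply]
  refine Finset.sum_congr rfl fun r _ => Finset.sum_congr rfl fun s _ => ?_
  rw [Matrix.map_smulₛₗ _ f _ (map_mul f _), placeOnLegs_map, Matrix.map_single,
    Matrix.map_single, map_pow, map_neg, map_one]

end IntegerModel

/-- Mixed cubic relations among the operators `P^{ij}`, `Q^{ij}` in `End(C^{1|1})^{⊗3}`. -/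
theorem stmt5 :
    (P12 * P13 * Q23 = P23 * Q13 * P12 ∧ P23 * Q13 * P12 = Q12 * P13 * P23 ∧
      Q12 * P13 * P23 = Q23 * Q13 * Q12) ∧
    (Q23 * P13 * P12 = P12 * Q13 * P23 ∧ P12 * Q13 * P23 = P23 * P13 * Q12 ∧
      P23 * P13 * Q12 = Q12 * Q13 * Q23) := by
  have twoLegOp_complex (φ : I1 → I1) (ij : Legs) :
      twoLegOp ℂ φ ij = (twoLegOp ℤ φ ij).map (Int.castRingHom ℂ) :=
    (twoLegOp_map _ φ ij).symm
  have hP12 : P12 = twoLegOp ℂ id .l12 := rfl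
  have hP13 : P13 = twoLegOp ℂ id .l13 := rfl
  have hP23 : P23 = twoLegOp ℂ id .l23 := rfl
  have hQ12 : Q12 = twoLegOp ℂ I1.neg .l12 := rfl
  have hQ13 : Q13 = twoLegOp ℂ I1.neg .l13 := rfl
  have hQ23 : Q23 = twoLegOp ℂ I1.neg .l23 := rfl
  simp only [hP12, hP13, hP23, hQ12, hQ13, hQ23, twoLegOp_complex, ← Matrix.map_mul]
  refine ⟨⟨?_, ?_, ?_⟩, ?_, ?_, ?_⟩ <;> refine congrArg (Matrix.map · _) ?_ <;> decide
end

section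
/- Let A be a unital associative superalgebra and X(u) a 2×2 matrix of YQ form with entries in A[[u^{-1}]]. If x_{11}(u) is invertible in A[[u^{-1}]] and x_{-1,1}(u) ∈ u^{-1}A[[u^{-1}]], then X(u) is invertible, and its inverse is again of YQ form. -/
/-- The substitution `u ↦ -u` on a formal series in `u⁻¹` (negating the coefficient of
`u^{-r}` for odd `r`); we identify `A[[u⁻¹]]` with `PowerSeries A`. -/
noncomputable def negSub {A : Type*} [Ring A] (f : PowerSeries A) : PowerSeries A :=
  PowerSeries.mk fun r => ((-1 : ℤ) ^ r) • PowerSeries.coeff r f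

/-- A `2×2` matrix `X(u) = Σ_{i,j} ε_{ij} ⊗ x_{ij}(u)` with entries in `A[[u⁻¹]]` is of
YQ form if `x_{-i,-j}(u) = x_{ij}(-u)` and each coefficient of `x_{ij}(u)` is homogeneous
of parity `|i| + |j|` with respect to the grading `𝒜` of the superalgebra `A`. -/
def IsYQ {A : Type*} [Ring A] [Algebra ℂ A] (𝒜 : ZMod 2 → Submodule ℂ A)
    (X : I1 → I1 → PowerSeries A) : Prop :=
  (∀ i j, X (I1.neg i) (I1.neg j) = negSub (X i j)) ∧
  (∀ i j (r : ℕ), PowerSeries.coeff r (X i j) ∈ 𝒜 (I1.par i + I1.par j))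

/-- Product of two `2×2` matrices `Σ ε_{ij} ⊗ x_{ij}(u)` in the super tensor product
`End(C^{1|1}) ⊗ A[[u⁻¹]]` (with Koszul signs). -/
noncomputable def ymul {A : Type*} [Ring A] (X Y : I1 → I1 → PowerSeries A) :
    I1 → I1 → PowerSeries A :=
  fun i j => ∑ k : I1,
    ((-1 : ℤ) ^ (((I1.par i + I1.par k) * (I1.par k + I1.par j)).val)) • (X i k * Y k j)


/-!
With the Koszul signs, `ymul` is still an associative product with unit `yone`, so two-sided
inverses are unique. Since `x₁₁` is invertible and `x_{-1,1}` has no constant term, the Schur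
complement `x_{-1,-1} + x_{-1,1} x₁₁⁻¹ x_{1,-1}` has the same constant term as
`x_{-1,-1}(u) = x₁₁(-u)`, so it is invertible too, and block elimination inverts `X`.
Each of the two YQ conditions says that `X` is fixed by a map compatible with `ymul` and `yone`:
`X(u) ↦ X(-u)` with reflected indices, and the grading automorphism `x₀ + x₁ ↦ x₀ - x₁` of `A`
twisted by the signs `(-1)^(|i|+|j|)`. Such a map sends the inverse of `X` to an inverse of `X`,
hence fixes it.
-/

open PowerSeries DirectSum

lemma ZMod.eq_zero_or_eq_one (i : ZMod 2) : i = 0 ∨ i = 1 := by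
  revert i; decide

lemma ZMod.neg_one_pow_val_add (i j : ZMod 2) :
    (-1 : ℤ) ^ (i + j).val = (-1) ^ i.val * (-1) ^ j.val := by
  fin_cases i <;> fin_cases j <;> rfl

lemma eq_zero_of_add_self_eq_zero_of_invertible {R M : Type*} [CommRing R] [AddCommGroup M]
    [Module R M] [Invertible (2 : R)] {x : M} (h : x + x = 0) : x = 0 := by
  rw [← one_smul R x, ← invOf_mul_self (2 : R), mul_smul, two_smul, h, smul_zero]

lemma neg_one_pow_smul_eq_iff {M : Type*} [AddCommGroup M] (k : ℕ) (x y : M) :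
    (-1 : ℤ) ^ k • x = y ↔ x = (-1 : ℤ) ^ k • y := by
  constructor <;> rintro rfl <;> rw [smul_smul, ← mul_pow] <;> simp

section GradeInvolution

variable {R A : Type*} [CommRing R] [Ring A] [Algebra R A] (𝒜 : ZMod 2 → Submodule R A)
  [GradedAlgebra 𝒜]

lemma decompose_of_mem_apply {i : ZMod 2} {x : A} (hx : x ∈ 𝒜 i) (j : ZMod 2) :
    (decompose 𝒜 x j : A) = if i = j then x else 0 := by
  split_ifs with h
  · exact h ▸ decompose_of_mem_same 𝒜 hx
  · exact decompose_of_mem_ne 𝒜 hx h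

lemma decompose_zero_add_decompose_one (x : A) :
    (decompose 𝒜 x 0 : A) + (decompose 𝒜 x 1 : A) = x := by
  induction x using Decomposition.inductionOn 𝒜 with
  | zero => simp
  | add x y hx hy =>
    simp only [decompose_add, DirectSum.add_apply, Submodule.coe_add]
    rw [add_add_add_comm, hx, hy]
  | @homogeneous i x =>
    rw [decompose_of_mem_apply 𝒜 x.2, decompose_of_mem_apply 𝒜 x.2]
    obtain rfl | rfl := ZMod.eq_zero_or_eq_one i <;> simp

def gradeInvolutionFun (x : A) : A := (decompose 𝒜 x 0 : A) - (decompose 𝒜 x 1 : A)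

lemma gradeInvolutionFun_of_mem {i : ZMod 2} {x : A} (hx : x ∈ 𝒜 i) :
    gradeInvolutionFun 𝒜 x = (-1 : ℤ) ^ i.val • x := by
  obtain rfl | rfl := ZMod.eq_zero_or_eq_one i <;>
    simp [gradeInvolutionFun, decompose_of_mem_apply 𝒜 hx,
      show ZMod.val (1 : ZMod 2) = 1 from rfl]

lemma gradeInvolutionFun_add (x y : A) :
    gradeInvolutionFun 𝒜 (x + y) = gradeInvolutionFun 𝒜 x + gradeInvolutionFun 𝒜 y := by
  simp only [gradeInvolutionFun, decompose_add, DirectSum.add_apply, Submodule.coe_add]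
  abel

def gradeInvolution : A →+* A where
  toFun := gradeInvolutionFun 𝒜
  map_one' := by simpa using gradeInvolutionFun_of_mem 𝒜 (SetLike.one_mem_graded 𝒜)
  map_zero' := by simp [gradeInvolutionFun]
  map_add' := gradeInvolutionFun_add 𝒜
  map_mul' x y := by
    induction x using Decomposition.inductionOn 𝒜 with
    | zero => simp [gradeInvolutionFun]
    | add x x' hx hx' =>
      rw [add_mul, gradeInvolutionFun_add, gradeInvolutionFun_add, hx, hx', add_mul]
    | homogeneous x =>
      induction y using Decomposition.inductionOn 𝒜 with
      | zero => simp [gradeInvolutionFun]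
      | add y y' hy hy' =>
        rw [mul_add, gradeInvolutionFun_add, gradeInvolutionFun_add, hy, hy', mul_add]
      | homogeneous y =>
        rw [gradeInvolutionFun_of_mem 𝒜 (SetLike.mul_mem_graded x.2 y.2),
          gradeInvolutionFun_of_mem 𝒜 x.2, gradeInvolutionFun_of_mem 𝒜 y.2,
          smul_mul_smul_comm, ZMod.neg_one_pow_val_add]

lemma gradeInvolution_apply (x : A) :
    gradeInvolution 𝒜 x = (decompose 𝒜 x 0 : A) - (decompose 𝒜 x 1 : A) := rfl

lemma mem_iff_gradeInvolution_eq [Invertible (2 : R)] (i : ZMod 2) (x : A) :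
    x ∈ 𝒜 i ↔ gradeInvolution 𝒜 x = (-1 : ℤ) ^ i.val • x := by
  refine ⟨gradeInvolutionFun_of_mem 𝒜, fun h => ?_⟩
  have hx := decompose_zero_add_decompose_one 𝒜 x
  rw [gradeInvolution_apply] at h
  set e : A := (decompose 𝒜 x 0 : A)
  set o : A := (decompose 𝒜 x 1 : A)
  rw [← hx] at h ⊢
  obtain rfl | rfl := ZMod.eq_zero_or_eq_one i
  · have ho : o + o = (e + o) - (e - o) := by abel
    rw [h, ZMod.val_zero, pow_zero, one_smul, sub_self] at ho
    rw [eq_zero_of_add_self_eq_zero_of_invertible (R := R) ho, add_zero]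
    exact SetLike.coe_mem _
  · have he : e + e = (e - o) + (e + o) := by abel
    rw [h, show ZMod.val (1 : ZMod 2) = 1 from rfl, pow_one, neg_one_smul, neg_add_cancel] at he
    rw [eq_zero_of_add_self_eq_zero_of_invertible (R := R) he, zero_add]
    exact SetLike.coe_mem _

end GradeInvolution

section NegSub

variable {A : Type*} [Ring A]

lemma coeff_negSub (f : PowerSeries A) (n : ℕ) :
    coeff n (negSub f) = (-1 : ℤ) ^ n • coeff n f := by
  simp [negSub]

lemma negSub_negSub (f : PowerSeries A) : negSub (negSub f) = f := by
  ext n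
  rw [coeff_negSub, coeff_negSub, smul_smul, ← mul_pow]
  norm_num

lemma constantCoeff_negSub (f : PowerSeries A) :
    constantCoeff (negSub f) = constantCoeff f := by
  rw [← coeff_zero_eq_constantCoeff_apply, coeff_negSub]
  simp

noncomputable def negSubHom : PowerSeries A →+* PowerSeries A where
  toFun := negSub
  map_one' := by
    ext n
    rw [coeff_negSub]
    rcases eq_or_ne n 0 with rfl | hn <;> simp [coeff_one, *]
  map_zero' := by ext n; simp [coeff_negSub]
  map_add' f g := by ext n; simp [coeff_negSub, smul_add]
  map_mul' f g := by
    ext n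
    rw [coeff_negSub, coeff_mul, coeff_mul, Finset.smul_sum]
    refine Finset.sum_congr rfl fun ⟨i, j⟩ hij => ?_
    rw [Finset.HasAntidiagonal.mem_antidiagonal] at hij
    rw [coeff_negSub, coeff_negSub, smul_mul_smul_comm, ← pow_add, hij]

lemma negSubHom_apply (f : PowerSeries A) : negSubHom f = negSub f := rfl

end NegSub

section SuperMatrix

variable {A : Type*} [Ring A]

noncomputable def yone : I1 → I1 → PowerSeries A := fun i j => if i = j then 1 else 0

lemma ymul_assoc (X Y Z : I1 → I1 → PowerSeries A) :
    ymul (ymul X Y) Z = ymul X (ymul Y Z) := by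
  funext i j
  simp only [ymul, Finset.sum_mul, Finset.mul_sum, Finset.smul_sum, smul_mul_assoc,
    mul_smul_comm, smul_smul, mul_assoc]
  rw [Finset.sum_comm]
  refine Finset.sum_congr rfl fun k _ => Finset.sum_congr rfl fun l _ => ?_
  congr 1
  revert i j k l
  decide

lemma ymul_yone (X : I1 → I1 → PowerSeries A) : ymul X yone = X := by
  funext i j
  simp [ymul, yone, CharTwo.add_self_eq_zero]

lemma yone_ymul (X : I1 → I1 → PowerSeries A) : ymul yone X = X := by
  funext i j
  simp [ymul, yone, CharTwo.add_self_eq_zero]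

lemma apply_eq_self_of_ymul_inverse
    {Φ : (I1 → I1 → PowerSeries A) → (I1 → I1 → PowerSeries A)}
    (hΦ : ∀ X Y, Φ (ymul X Y) = ymul (Φ X) (Φ Y)) (hΦ₁ : Φ yone = yone)
    {X Y : I1 → I1 → PowerSeries A} (hX : Φ X = X) (hXY : ymul X Y = yone)
    (hYX : ymul Y X = yone) : Φ Y = Y := by
  have hleft : ymul (Φ Y) X = yone := by rw [← hX, ← hΦ, hYX, hΦ₁]
  calc Φ Y = ymul (ymul (Φ Y) X) Y := by rw [ymul_assoc, hXY, ymul_yone]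
    _ = Y := by rw [hleft, yone_ymul]

lemma ymul_map {B : Type*} [Ring B] (φ : PowerSeries A →+* PowerSeries B)
    (X Y : I1 → I1 → PowerSeries A) :
    ymul (fun i j => φ (X i j)) (fun i j => φ (Y i j)) = fun i j => φ (ymul X Y i j) := by
  funext i j
  simp [ymul]

lemma ymul_neg_neg (X Y : I1 → I1 → PowerSeries A) :
    ymul (fun i j => X i.neg j.neg) (fun i j => Y i.neg j.neg) =
      fun i j => ymul X Y i.neg j.neg := by
  funext i j
  refine Fintype.sum_equiv (Equiv.sumComm _ _) _ _ fun k => ?_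
  congr 1
  revert i j k
  decide

lemma ymul_signTwist (X Y : I1 → I1 → PowerSeries A) :
    ymul (fun i j => (-1 : ℤ) ^ (I1.par i + I1.par j).val • X i j)
        (fun i j => (-1 : ℤ) ^ (I1.par i + I1.par j).val • Y i j) =
      fun i j => (-1 : ℤ) ^ (I1.par i + I1.par j).val • ymul X Y i j := by
  funext i j
  simp only [ymul, Finset.smul_sum, smul_mul_smul_comm, smul_smul]
  refine Finset.sum_congr rfl fun k _ => ?_
  congr 1
  revert i j k
  decide

def I1.mat {R : Type*} (a b c d : R) : I1 → I1 → R
  | .inl _, .inl _ => a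
  | .inl _, .inr _ => b
  | .inr _, .inl _ => c
  | .inr _, .inr _ => d

lemma I1.mat_eta {R : Type*} (X : I1 → I1 → R) :
    X = I1.mat (X (.inl 0) (.inl 0)) (X (.inl 0) (.inr 0)) (X (.inr 0) (.inl 0))
      (X (.inr 0) (.inr 0)) := by
  funext i j
  rcases i with i | i <;> rcases j with j | j <;>
    rw [Subsingleton.elim i 0, Subsingleton.elim j 0] <;> rfl

lemma yone_eq_mat : (yone : I1 → I1 → PowerSeries A) = I1.mat 1 0 0 1 := by
  rw [I1.mat_eta yone]; simp [yone]

lemma ymul_mat (a b c d a' b' c' d' : PowerSeries A) :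
    ymul (I1.mat a b c d) (I1.mat a' b' c' d') =
      I1.mat (a * a' - b * c') (a * b' + b * d') (c * a' + d * c') (-(c * b') + d * d') := by
  rw [I1.mat_eta (ymul _ _)]
  simp [ymul, Fintype.sum_sum_type, I1.mat, I1.par, sub_eq_add_neg,
    show ZMod.val (1 : ZMod 2) = 1 from rfl, show (1 + 1 : ZMod 2) = 0 from rfl]

end SuperMatrix

section Schur

variable {A : Type*} [Ring A]

lemma exists_ymul_inverse_of_isUnit_schur {a b c d g : PowerSeries A} (hag : a * g = 1)
    (hga : g * a = 1) (hs : IsUnit (d + c * g * b)) :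
    ∃ Y, ymul (I1.mat a b c d) Y = yone ∧ ymul Y (I1.mat a b c d) = yone := by
  obtain ⟨⟨s, t, hst, hts⟩, hs⟩ := hs
  obtain rfl : d = s - c * g * b := eq_sub_of_add_eq hs.symm
  have hag' (z) : a * (g * z) = z := by rw [← mul_assoc, hag, one_mul]
  have hst' (z) : s * (t * z) = z := by rw [← mul_assoc, hst, one_mul]
  refine ⟨I1.mat (g - g * b * t * c * g) (-(g * b * t)) (-(t * c * g)) t, ?_, ?_⟩ <;>
    rw [ymul_mat, yone_eq_mat] <;> congr 1 <;>
    simp only [mul_sub, sub_mul, mul_neg, neg_mul, mul_assoc, hag, hga, hst, hts, hag', hst',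
      mul_one, neg_neg] <;> abel

end Schur

section YQ

variable {A : Type*} [Ring A]

noncomputable def reflectNegSub (X : I1 → I1 → PowerSeries A) : I1 → I1 → PowerSeries A :=
  fun i j => negSub (X i.neg j.neg)

lemma reflectNegSub_ymul (X Y : I1 → I1 → PowerSeries A) :
    reflectNegSub (ymul X Y) = ymul (reflectNegSub X) (reflectNegSub Y) := by
  change _ = ymul (fun i j => negSubHom (X i.neg j.neg)) (fun i j => negSubHom (Y i.neg j.neg))
  rw [ymul_map, ymul_neg_neg]
  rfl

lemma reflectNegSub_yone : reflectNegSub (yone : I1 → I1 → PowerSeries A) = yone := by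
  funext i j
  simp only [reflectNegSub, yone, I1.neg, Sum.swap_leftInverse.injective.eq_iff,
    ← negSubHom_apply]
  split_ifs <;> simp

variable {R : Type*} [CommRing R] [Algebra R A] (𝒜 : ZMod 2 → Submodule R A) [GradedAlgebra 𝒜]

noncomputable def gradeTwist (X : I1 → I1 → PowerSeries A) : I1 → I1 → PowerSeries A :=
  fun i j => (-1 : ℤ) ^ (I1.par i + I1.par j).val • map (gradeInvolution 𝒜) (X i j)

lemma gradeTwist_ymul (X Y : I1 → I1 → PowerSeries A) :
    gradeTwist 𝒜 (ymul X Y) = ymul (gradeTwist 𝒜 X) (gradeTwist 𝒜 Y) := by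
  unfold gradeTwist
  rw [ymul_signTwist, ymul_map]

lemma gradeTwist_yone : gradeTwist 𝒜 (yone : I1 → I1 → PowerSeries A) = yone := by
  funext i j
  simp only [gradeTwist, yone]
  split_ifs with h
  · simp [h, CharTwo.add_self_eq_zero]
  · simp

end YQ

lemma isYQ_iff {A : Type*} [Ring A] [Algebra ℂ A] (𝒜 : ZMod 2 → Submodule ℂ A)
    [GradedAlgebra 𝒜] (X : I1 → I1 → PowerSeries A) :
    IsYQ 𝒜 X ↔ reflectNegSub X = X ∧ gradeTwist 𝒜 X = X := by
  refine and_congr ⟨fun h => ?_, fun h i j => ?_⟩ ?_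
  · funext i j
    rw [reflectNegSub, h, negSub_negSub]
  · rw [← congrFun (congrFun h i.neg) j.neg]
    simp [reflectNegSub, I1.neg]
  · simp only [funext_iff, PowerSeries.ext_iff, gradeTwist, map_zsmul, coeff_map,
      neg_one_pow_smul_eq_iff, mem_iff_gradeInvolution_eq]

/-- If `X(u)` is of YQ form, `x_{11}(u)` is invertible and `x_{-1,1}(u) ∈ u⁻¹A[[u⁻¹]]`
(i.e. has vanishing constant term), then `X(u)` is an invertible `2×2` matrix and its
inverse is again of YQ form. -/
theorem stmt7 {A : Type*} [Ring A] [Algebra ℂ A] (𝒜 : ZMod 2 → Submodule ℂ A)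
    [GradedAlgebra 𝒜] (X : I1 → I1 → PowerSeries A) (hX : IsYQ 𝒜 X)
    (hinv : IsUnit (X (Sum.inl 0) (Sum.inl 0)))
    (hlow : PowerSeries.constantCoeff (X (Sum.inr 0) (Sum.inl 0)) = 0) :
    ∃ Y : I1 → I1 → PowerSeries A, IsYQ 𝒜 Y ∧
      (∀ i j, ymul X Y i j = if i = j then 1 else 0) ∧
      (∀ i j, ymul Y X i j = if i = j then 1 else 0) := by
  have hd : X (.inr 0) (.inr 0) = negSub (X (.inl 0) (.inl 0)) := hX.1 (.inl 0) (.inl 0)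
  obtain ⟨⟨a, g, hag, hga⟩, ha : a = X (.inl 0) (.inl 0)⟩ := hinv
  have hschur : IsUnit (X (.inr 0) (.inr 0) + X (.inr 0) (.inl 0) * g * X (.inl 0) (.inr 0)) := by
    rw [isUnit_iff_constantCoeff, map_add, map_mul, map_mul, hlow, zero_mul, zero_mul, add_zero,
      hd, constantCoeff_negSub, ← ha]
    exact (Units.isUnit ⟨a, g, hag, hga⟩).map constantCoeff
  subst ha
  obtain ⟨Y, hXY, hYX⟩ := exists_ymul_inverse_of_isUnit_schur hag hga hschur
  rw [← I1.mat_eta X] at hXY hYX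
  obtain ⟨hreflX, htwistX⟩ := (isYQ_iff 𝒜 X).1 hX
  refine ⟨Y, (isYQ_iff 𝒜 Y).2 ⟨?_, ?_⟩, fun i j => congrFun₂ hXY i j,
    fun i j => congrFun₂ hYX i j⟩
  · exact apply_eq_self_of_ymul_inverse reflectNegSub_ymul reflectNegSub_yone hreflX hXY hYX
  · exact apply_eq_self_of_ymul_inverse (gradeTwist_ymul 𝒜) (gradeTwist_yone 𝒜) htwistX hXY hYX
end

section
/- Let T(u) = F(u)H(u)E(u) be the block Gauss decomposition of an invertible n×n block matrix over a unital ring, with F lower unitriangular, H = diag(H_1,…,H_n), E upper unitriangular, and each H_a invertible. Then the inverse matrix T(u)^{-1}, written in block form, has lower-right (n-m)×(n-m) corner block matrix whose inverse equals F^{[m]}(u) H^{[m]}(u) E^{[m]}(u), where F^{[m]}, H^{[m]}, E^{[m]} denote the lower-right (n-m)×(n-m) submatrices of F, H, E respectively. -/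
section Aux

variable {R : Type*} [Ring R] {m k : ℕ}

/-- corner multiplicativity when B vanishes above the diagonal -/
lemma corner_mul_lower (A B : Matrix (Fin (m + k)) (Fin (m + k)) R)
    (hB : ∀ a b, a < b → B a b = 0) :
    (A * B).submatrix (Fin.natAdd m) (Fin.natAdd m) =
      A.submatrix (Fin.natAdd m) (Fin.natAdd m) * B.submatrix (Fin.natAdd m) (Fin.natAdd m) := by
  ext a b
  simp only [Matrix.submatrix_apply, Matrix.mul_apply]
  rw [Fin.sum_univ_add]
  have : ∀ c : Fin m, A (Fin.natAdd m a) (Fin.castAdd k c) * B (Fin.castAdd k c) (Fin.natAdd m b) = 0 := by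
    intro c
    rw [hB _ _ (by simp [Fin.lt_def]; omega), mul_zero]
  simp [this]

/-- corner multiplicativity when A vanishes below the diagonal -/
lemma corner_mul_upper (A B : Matrix (Fin (m + k)) (Fin (m + k)) R)
    (hA : ∀ a b, b < a → A a b = 0) :
    (A * B).submatrix (Fin.natAdd m) (Fin.natAdd m) =
      A.submatrix (Fin.natAdd m) (Fin.natAdd m) * B.submatrix (Fin.natAdd m) (Fin.natAdd m) := by
  ext a b
  simp only [Matrix.submatrix_apply, Matrix.mul_apply]
  rw [Fin.sum_univ_add]
  have : ∀ c : Fin m, A (Fin.natAdd m a) (Fin.castAdd k c) * B (Fin.castAdd k c) (Fin.natAdd m b) = 0 := by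
    intro c
    rw [hA _ _ (by simp [Fin.lt_def]; omega), zero_mul]
  simp [this]

lemma corner_one : (1 : Matrix (Fin (m + k)) (Fin (m + k)) R).submatrix (Fin.natAdd m) (Fin.natAdd m) = 1 := by
  ext a b
  simp only [Matrix.submatrix_apply, Matrix.one_apply]
  by_cases h : a = b
  · simp [h]
  · have hne : Fin.natAdd m a ≠ Fin.natAdd m b := by
      simp only [ne_eq, Fin.ext_iff, Fin.coe_natAdd]
      intro hc; exact h (Fin.ext (by omega))
    rw [if_neg h, if_neg hne]

/-- strictly lower triangular matrices have vanishing high powers entrywise -/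
lemma strict_pow_zero {n : ℕ} (N : Matrix (Fin n) (Fin n) R)
    (hN : ∀ a b : Fin n, (a : ℕ) ≤ b → N a b = 0) :
    ∀ p (a b : Fin n), (a : ℕ) < (b : ℕ) + p → (N ^ p) a b = 0 := by
  intro p
  induction p with
  | zero => intro a b h; simp only [pow_zero, Matrix.one_apply]; rw [if_neg]; omega
  | succ p ih =>
    intro a b h
    rw [pow_succ', Matrix.mul_apply]
    apply Finset.sum_eq_zero
    intro c _
    by_cases hc : (c : ℕ) < a
    · rw [ih c b (by omega), mul_zero]
    · rw [hN a c (by omega), zero_mul]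

/-- lower unitriangular matrices have lower unitriangular two-sided inverses -/
lemma lower_unitri_inv {n : ℕ} (F : Matrix (Fin n) (Fin n) R)
    (hd : ∀ a, F a a = 1) (hu : ∀ a b, a < b → F a b = 0) :
    ∃ G : Matrix (Fin n) (Fin n) R, G * F = 1 ∧ F * G = 1 ∧ ∀ a b, a < b → G a b = 0 := by
  set M : Matrix (Fin n) (Fin n) R := 1 - F with hM
  have hMs : ∀ a b : Fin n, (a : ℕ) ≤ b → M a b = 0 := by
    intro a b h
    rcases eq_or_lt_of_le h with h | h
    · have : a = b := Fin.ext h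
      subst this; simp [hM, Matrix.sub_apply, hd]
    · simp [hM, Matrix.sub_apply, hu a b (Fin.lt_def.mpr h), Matrix.one_apply_ne (Fin.ne_of_lt (Fin.lt_def.mpr h))]
  have hMn : M ^ n = 0 := by
    ext a b
    exact strict_pow_zero M hMs n a b (by omega)
  refine ⟨∑ i ∈ Finset.range n, M ^ i, ?_, ?_, ?_⟩
  · have := geom_sum_mul M n
    have hF : F = -(M - 1) := by rw [hM]; noncomm_ring
    rw [hF, mul_neg, this, hMn]; noncomm_ring
  · have := mul_geom_sum M n
    have hF : F = -(M - 1) := by rw [hM]; noncomm_ring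
    rw [hF, neg_mul, this, hMn]; noncomm_ring
  · intro a b hab
    rw [Matrix.sum_apply]
    apply Finset.sum_eq_zero
    intro i _
    rcases Nat.eq_zero_or_pos i with h | h
    · subst h; exact Matrix.one_apply_ne (Fin.ne_of_lt hab)
    · exact strict_pow_zero M hMs i a b (by have := Fin.lt_def.mp hab; omega)

/-- upper unitriangular matrices have upper unitriangular two-sided inverses -/
lemma upper_unitri_inv {n : ℕ} (E : Matrix (Fin n) (Fin n) R)
    (hd : ∀ a, E a a = 1) (hl : ∀ a b, b < a → E a b = 0) :
    ∃ G : Matrix (Fin n) (Fin n) R, G * E = 1 ∧ E * G = 1 ∧ ∀ a b, b < a → G a b = 0 := by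
  set M : Matrix (Fin n) (Fin n) R := 1 - E with hM
  have hMs : ∀ a b : Fin n, (b : ℕ) ≤ a → M a b = 0 := by
    intro a b h
    rcases eq_or_lt_of_le h with h | h
    · have : b = a := Fin.ext h
      subst this; simp [hM, Matrix.sub_apply, hd]
    · simp [hM, Matrix.sub_apply, hl a b (Fin.lt_def.mpr h),
        Matrix.one_apply_ne (Fin.ne_of_lt (Fin.lt_def.mpr h)).symm]
  have hpow : ∀ p (a b : Fin n), (b : ℕ) < (a : ℕ) + p → (M ^ p) a b = 0 := by
    intro p
    induction p with
    | zero => intro a b h; simp only [pow_zero, Matrix.one_apply]; rw [if_neg]; omega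
    | succ p ih =>
      intro a b h
      rw [pow_succ', Matrix.mul_apply]
      apply Finset.sum_eq_zero
      intro c _
      by_cases hc : (a : ℕ) < c
      · rw [ih c b (by omega), mul_zero]
      · rw [hMs a c (by omega), zero_mul]
  have hMn : M ^ n = 0 := by
    ext a b
    exact hpow n a b (by omega)
  refine ⟨∑ i ∈ Finset.range n, M ^ i, ?_, ?_, ?_⟩
  · have := geom_sum_mul M n
    have hE : E = -(M - 1) := by rw [hM]; noncomm_ring
    rw [hE, mul_neg, this, hMn]; noncomm_ring
  · have := mul_geom_sum M n
    have hE : E = -(M - 1) := by rw [hM]; noncomm_ring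
    rw [hE, neg_mul, this, hMn]; noncomm_ring
  · intro a b hab
    rw [Matrix.sum_apply]
    apply Finset.sum_eq_zero
    intro i _
    rcases Nat.eq_zero_or_pos i with h | h
    · subst h; exact Matrix.one_apply_ne (Fin.ne_of_lt hab).symm
    · exact hpow i a b (by have := Fin.lt_def.mp hab; omega)

end Aux

/-- Let `T = F H E` be the block Gauss decomposition of an invertible `(m+k)×(m+k)` block
matrix over a unital (possibly noncommutative) ring, with `F` lower unitriangular,
`H` diagonal with invertible diagonal blocks, `E` upper unitriangular. Then the lower-right
`k×k` corner of `T⁻¹` is a two-sided inverse of `F^{[m]} H^{[m]} E^{[m]}`, the product of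
the lower-right `k×k` corners of `F`, `H`, `E`. -/
theorem stmt15 {R : Type*} [Ring R] {m k : ℕ}
    (F H E T Tinv : Matrix (Fin (m + k)) (Fin (m + k)) R)
    (hFdiag : ∀ a, F a a = 1) (hFupper : ∀ a b, a < b → F a b = 0)
    (hHdiag : ∀ a b, a ≠ b → H a b = 0) (hHinv : ∀ a, IsUnit (H a a))
    (hEdiag : ∀ a, E a a = 1) (hElower : ∀ a b, b < a → E a b = 0)
    (hT : T = F * H * E) (h1 : T * Tinv = 1) (h2 : Tinv * T = 1) :
    Tinv.submatrix (Fin.natAdd m) (Fin.natAdd m) *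
        (F.submatrix (Fin.natAdd m) (Fin.natAdd m) *
          H.submatrix (Fin.natAdd m) (Fin.natAdd m) *
          E.submatrix (Fin.natAdd m) (Fin.natAdd m)) = 1 ∧
    (F.submatrix (Fin.natAdd m) (Fin.natAdd m) *
          H.submatrix (Fin.natAdd m) (Fin.natAdd m) *
          E.submatrix (Fin.natAdd m) (Fin.natAdd m)) *
        Tinv.submatrix (Fin.natAdd m) (Fin.natAdd m) = 1 := by
  obtain ⟨GF, hGF1, hGF2, hGFu⟩ := lower_unitri_inv F hFdiag hFupper
  obtain ⟨GE, hGE1, hGE2, hGEl⟩ := upper_unitri_inv E hEdiag hElower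
  -- inverse of H
  set HI : Matrix (Fin (m + k)) (Fin (m + k)) R :=
    Matrix.diagonal (fun a => Ring.inverse (H a a)) with hHI
  have hHd : H = Matrix.diagonal (fun a => H a a) := by
    ext a b
    by_cases h : a = b
    · subst h; simp
    · simp [Matrix.diagonal_apply_ne _ h, hHdiag a b h]
  have hHI1 : HI * H = 1 := by
    rw [hHI, hHd, Matrix.diagonal_mul_diagonal]
    convert Matrix.diagonal_one using 2
    funext a
    simp only [Matrix.diagonal_apply_eq]
    exact Ring.inverse_mul_cancel _ (hHinv a)
  have hHI2 : H * HI = 1 := by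
    rw [hHI, hHd, Matrix.diagonal_mul_diagonal]
    convert Matrix.diagonal_one using 2
    funext a
    simp only [Matrix.diagonal_apply_eq]
    exact Ring.mul_inverse_cancel _ (hHinv a)
  have hHl : ∀ a b : Fin (m + k), a < b → H a b = 0 := fun a b h => hHdiag a b (Fin.ne_of_lt h)
  have hHu : ∀ a b : Fin (m + k), b < a → H a b = 0 := fun a b h => hHdiag a b (Fin.ne_of_lt h).symm
  have hHIu : ∀ a b : Fin (m + k), b < a → HI a b = 0 := fun a b h => by
    rw [hHI]; exact Matrix.diagonal_apply_ne _ (Fin.ne_of_lt h).symm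
  -- Tinv = GE * HI * GF
  have hTinv : Tinv = GE * HI * GF := by
    have hX : (GE * HI * GF) * T = 1 := by
      rw [hT]
      calc GE * HI * GF * (F * H * E) = GE * HI * (GF * F) * H * E := by noncomm_ring
        _ = GE * (HI * H) * E := by rw [hGF1]; noncomm_ring
        _ = GE * E := by rw [hHI1]; noncomm_ring
        _ = 1 := hGE1
    calc Tinv = 1 * Tinv := (one_mul _).symm
      _ = (GE * HI * GF) * T * Tinv := by rw [hX]
      _ = (GE * HI * GF) * (T * Tinv) := by noncomm_ring
      _ = GE * HI * GF := by rw [h1, mul_one]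
  -- corner computations
  have hcT : Tinv.submatrix (Fin.natAdd m) (Fin.natAdd m) =
      GE.submatrix (Fin.natAdd m) (Fin.natAdd m) * HI.submatrix (Fin.natAdd m) (Fin.natAdd m) *
        GF.submatrix (Fin.natAdd m) (Fin.natAdd m) := by
    rw [hTinv, mul_assoc, corner_mul_upper _ _ hGEl, corner_mul_upper _ _ hHIu, ← mul_assoc]
  have c1 : GF.submatrix (Fin.natAdd m) (Fin.natAdd m) * F.submatrix (Fin.natAdd m) (Fin.natAdd m) = 1 := by
    rw [← corner_mul_lower _ _ hFupper, hGF1, corner_one]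
  have c2 : HI.submatrix (Fin.natAdd m) (Fin.natAdd m) * H.submatrix (Fin.natAdd m) (Fin.natAdd m) = 1 := by
    rw [← corner_mul_lower _ _ hHl, hHI1, corner_one]
  have c3 : GE.submatrix (Fin.natAdd m) (Fin.natAdd m) * E.submatrix (Fin.natAdd m) (Fin.natAdd m) = 1 := by
    rw [← corner_mul_upper _ _ hGEl, hGE1, corner_one]
  have c4 : F.submatrix (Fin.natAdd m) (Fin.natAdd m) * GF.submatrix (Fin.natAdd m) (Fin.natAdd m) = 1 := by
    rw [← corner_mul_lower _ _ hGFu, hGF2, corner_one]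
  have c5 : H.submatrix (Fin.natAdd m) (Fin.natAdd m) * HI.submatrix (Fin.natAdd m) (Fin.natAdd m) = 1 := by
    rw [← corner_mul_upper _ _ hHu, hHI2, corner_one]
  have c6 : E.submatrix (Fin.natAdd m) (Fin.natAdd m) * GE.submatrix (Fin.natAdd m) (Fin.natAdd m) = 1 := by
    rw [← corner_mul_upper _ _ hElower, hGE2, corner_one]
  constructor
  · rw [hcT]
    calc GE.submatrix (Fin.natAdd m) (Fin.natAdd m) * HI.submatrix (Fin.natAdd m) (Fin.natAdd m) *
          GF.submatrix (Fin.natAdd m) (Fin.natAdd m) *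
          (F.submatrix (Fin.natAdd m) (Fin.natAdd m) * H.submatrix (Fin.natAdd m) (Fin.natAdd m) *
            E.submatrix (Fin.natAdd m) (Fin.natAdd m))
        = GE.submatrix (Fin.natAdd m) (Fin.natAdd m) * HI.submatrix (Fin.natAdd m) (Fin.natAdd m) *
            (GF.submatrix (Fin.natAdd m) (Fin.natAdd m) * F.submatrix (Fin.natAdd m) (Fin.natAdd m)) *
            H.submatrix (Fin.natAdd m) (Fin.natAdd m) * E.submatrix (Fin.natAdd m) (Fin.natAdd m) := by noncomm_ring
      _ = GE.submatrix (Fin.natAdd m) (Fin.natAdd m) *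
            (HI.submatrix (Fin.natAdd m) (Fin.natAdd m) * H.submatrix (Fin.natAdd m) (Fin.natAdd m)) *
            E.submatrix (Fin.natAdd m) (Fin.natAdd m) := by rw [c1]; noncomm_ring
      _ = GE.submatrix (Fin.natAdd m) (Fin.natAdd m) * E.submatrix (Fin.natAdd m) (Fin.natAdd m) := by
            rw [c2]; noncomm_ring
      _ = 1 := c3
  · rw [hcT]
    calc F.submatrix (Fin.natAdd m) (Fin.natAdd m) * H.submatrix (Fin.natAdd m) (Fin.natAdd m) *
          E.submatrix (Fin.natAdd m) (Fin.natAdd m) *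
          (GE.submatrix (Fin.natAdd m) (Fin.natAdd m) * HI.submatrix (Fin.natAdd m) (Fin.natAdd m) *
            GF.submatrix (Fin.natAdd m) (Fin.natAdd m))
        = F.submatrix (Fin.natAdd m) (Fin.natAdd m) * H.submatrix (Fin.natAdd m) (Fin.natAdd m) *
            (E.submatrix (Fin.natAdd m) (Fin.natAdd m) * GE.submatrix (Fin.natAdd m) (Fin.natAdd m)) *
            HI.submatrix (Fin.natAdd m) (Fin.natAdd m) * GF.submatrix (Fin.natAdd m) (Fin.natAdd m) := by noncomm_ring
      _ = F.submatrix (Fin.natAdd m) (Fin.natAdd m) *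
            (H.submatrix (Fin.natAdd m) (Fin.natAdd m) * HI.submatrix (Fin.natAdd m) (Fin.natAdd m)) *
            GF.submatrix (Fin.natAdd m) (Fin.natAdd m) := by rw [c6]; noncomm_ring
      _ = F.submatrix (Fin.natAdd m) (Fin.natAdd m) * GF.submatrix (Fin.natAdd m) (Fin.natAdd m) := by
            rw [c5]; noncomm_ring
      _ = 1 := c4
end
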